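/- Let V be a graded Lie algebra of degree n over a commutative ring R with 2 invertible, let D be a differential of odd degree k on V, and let V₀ ⊆ V be a graded R-submodule that is an abelian subalgebra (i.e., [V₀,V₀] = 0) and satisfies [D(V₀), V₀] ⊆ V₀. Then the restriction of the derived bracket [a,b]_{(D)} = (-1)^{n+|a|+1}[Da,b] to V₀ is a graded Lie bracket of degree n+k on V₀: it is graded skew-symmetric, [a,b]_{(D)} = -(-1)^{(n+k+|a|)(n+k+|b|)}[b,a]_{(D)}, and satisfies the graded Jacobi identity [a,[b,c]_{(D)}]_{(D)} = [[a,b]_{(D)},c]_{(D)} + (-1)^{(n+k+|a|)(n+k+|b|)}[b,[a,c]_{(D)}]_{(D)} for homogeneous a,b,c ∈ V₀. -/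

import Mathlib

/-- `(-1)^m` as an integer, for `m : ℤ` (depends only on the parity of `m`). -/
def gsign (m : ℤ) : ℤ := (((-1 : ℤˣ) ^ m : ℤˣ) : ℤ)

/-- A graded Lie algebra of degree `n` over a commutative ring `R`: a `ℤ`-graded
`R`-module with an `R`-bilinear bracket sending `V_i × V_j` into `V_{i+j+n}`,
graded skew-symmetric and satisfying the graded Jacobi identity. -/
structure GradedLieAlgebraDeg (R : Type*) [CommRing R] (V : Type*) [AddCommGroup V] [Module R V]
    (n : ℤ) where
  grade : ℤ → Submodule R V
  bracket : V →ₗ[R] V →ₗ[R] V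
  bracket_mem : ∀ i j : ℤ, ∀ a ∈ grade i, ∀ b ∈ grade j, bracket a b ∈ grade (i + j + n)
  skew : ∀ i j : ℤ, ∀ a ∈ grade i, ∀ b ∈ grade j,
    bracket a b = - (gsign ((n + i) * (n + j)) • bracket b a)
  jacobi : ∀ i j l : ℤ, ∀ a ∈ grade i, ∀ b ∈ grade j, ∀ c ∈ grade l,
    bracket a (bracket b c)
      = bracket (bracket a b) c + gsign ((n + i) * (n + j)) • bracket b (bracket a c)

/-- `D` is a differential of odd degree `k` on the graded Lie algebra `L`:
homogeneous of odd degree `k`, of square zero, and a graded derivation of the bracket. -/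
structure GradedLieAlgebraDeg.IsDifferential {R : Type*} [CommRing R] {V : Type*} [AddCommGroup V]
    [Module R V] {n : ℤ} (L : GradedLieAlgebraDeg R V n) (D : V →ₗ[R] V) (k : ℤ) : Prop where
  odd : Odd k
  map_mem : ∀ i : ℤ, ∀ a ∈ L.grade i, D a ∈ L.grade (i + k)
  sq_zero : ∀ a : V, D (D a) = 0
  leibniz : ∀ i j : ℤ, ∀ a ∈ L.grade i, ∀ b ∈ L.grade j,
    D (L.bracket a b) = L.bracket (D a) b + gsign (k * (n + i)) • L.bracket a (D b)

/-- The derived bracket `[a,b]_{(D)} = (-1)^{n+|a|+1} • [D a, b]`, for `a` homogeneous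
of degree `i`. -/
def GradedLieAlgebraDeg.der {R : Type*} [CommRing R] {V : Type*} [AddCommGroup V] [Module R V]
    {n : ℤ} (L : GradedLieAlgebraDeg R V n) (D : V →ₗ[R] V) (i : ℤ) (a b : V) : V :=
  gsign (n + i + 1) • L.bracket (D a) b

/-- The derived bracket `[a,b]_d = [[a,d],b]` by an element `d`. -/
def GradedLieAlgebraDeg.derEl {R : Type*} [CommRing R] {V : Type*} [AddCommGroup V] [Module R V]
    {n : ℤ} (L : GradedLieAlgebraDeg R V n) (d : V) (a b : V) : V :=
  L.bracket (L.bracket a d) b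


lemma gsign_add (a b : ℤ) : gsign (a + b) = gsign a * gsign b := by
  simp [gsign, zpow_add]

lemma gsign_congr (a b : ℤ) (w : ℤ) (h : a = b + 2 * w) : gsign a = gsign b := by
  subst h
  rw [gsign_add]
  have h2 : ((-1 : ℤˣ) ^ (2:ℤ)) = 1 := by
    rw [show (2:ℤ) = (2:ℕ) from rfl, zpow_natCast]; norm_num
  have : gsign (2 * w) = 1 := by simp [gsign, zpow_mul, h2]
  rw [this, mul_one]

lemma gsign_succ (a : ℤ) : gsign (a + 1) = -gsign a := by
  rw [gsign_add]; simp [gsign]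

/-- the restriction of the derived bracket to a graded abelian subalgebra
`V₀` (given by its graded pieces `grade₀ i ≤ L.grade i`) satisfying
`[D V₀, V₀] ⊆ V₀` is a graded Lie bracket of degree `n + k`: it maps the graded pieces
of `V₀` into `V₀`, is graded skew-symmetric, and satisfies the graded Jacobi identity. -/
theorem derived_bracket_on_abelian_subalgebra_is_lie {R : Type*} [CommRing R]
    [Invertible (2 : R)] {V : Type*} [AddCommGroup V] [Module R V] {n k : ℤ}
    (L : GradedLieAlgebraDeg R V n) (D : V →ₗ[R] V) (hD : L.IsDifferential D k)
    (grade₀ : ℤ → Submodule R V) (hle : ∀ i : ℤ, grade₀ i ≤ L.grade i)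
    (habelian : ∀ i j : ℤ, ∀ a ∈ grade₀ i, ∀ b ∈ grade₀ j, L.bracket a b = 0)
    (hclosed : ∀ i j : ℤ, ∀ a ∈ grade₀ i, ∀ b ∈ grade₀ j,
        L.bracket (D a) b ∈ grade₀ (i + j + (n + k))) :
    (∀ i j : ℤ, ∀ a ∈ grade₀ i, ∀ b ∈ grade₀ j,
        L.der D i a b ∈ grade₀ (i + j + (n + k))) ∧
    (∀ i j : ℤ, ∀ a ∈ grade₀ i, ∀ b ∈ grade₀ j,
        L.der D i a b = - (gsign ((n + k + i) * (n + k + j)) • L.der D j b a)) ∧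
    (∀ i j l : ℤ, ∀ a ∈ grade₀ i, ∀ b ∈ grade₀ j, ∀ c ∈ grade₀ l,
        L.der D i a (L.der D j b c)
          = L.der D (i + j + (n + k)) (L.der D i a b) c
            + gsign ((n + k + i) * (n + k + j)) • L.der D j b (L.der D i a c)) := by

  obtain ⟨t, ht⟩ := hD.odd
  have key : ∀ i j : ℤ, ∀ a ∈ grade₀ i, ∀ b ∈ grade₀ j,
      L.bracket (D a) b = - (gsign (k * (n + i)) • L.bracket a (D b)) := by
    intro i j a ha b hb
    have h := hD.leibniz i j a (hle i ha) b (hle j hb)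
    rw [habelian i j a ha b hb, map_zero] at h
    exact eq_neg_of_add_eq_zero_left h.symm
  refine ⟨?_, ?_, ?_⟩
  · intro i j a ha b hb
    exact zsmul_mem (hclosed i j a ha b hb) _
  · intro i j a ha b hb
    have h1 := key i j a ha b hb
    have h2 := L.skew i (j + k) a (hle i ha) (D b) (hD.map_mem j b (hle j hb))
    simp only [GradedLieAlgebraDeg.der]
    rw [h1, h2, smul_neg, smul_neg, smul_neg, neg_neg, smul_smul, smul_smul, smul_smul,
      ← neg_smul]
    congr 1
    simp only [← gsign_add, ← gsign_succ]
    exact gsign_congr _ _ (-1 - 2*t^2 - 2*t + i + i*t - j - j*t) (by rw [ht]; ring)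
  · intro i j l a ha b hb c hc
    have hDa := hD.map_mem i a (hle i ha)
    have hDb := hD.map_mem j b (hle j hb)
    have hjac := L.jacobi (i + k) (j + k) l (D a) hDa (D b) hDb c (hle l hc)
    have hleib := hD.leibniz (i + k) j (D a) hDa b (hle j hb)
    rw [hD.sq_zero] at hleib
    simp only [map_zero, LinearMap.zero_apply, zero_add] at hleib
    simp only [GradedLieAlgebraDeg.der, map_zsmul, LinearMap.smul_apply]
    rw [hleib]
    simp only [map_zsmul, LinearMap.smul_apply]
    rw [hjac]
    simp only [smul_add, smul_smul]
    congr 1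
    · congr 1
      simp only [← gsign_add]
      exact gsign_congr _ _ (-1 - 3*t - 2*t^2 - i - i*t - n - n*t) (by rw [ht]; ring)
    · congr 1
      simp only [← gsign_add]
      exact gsign_congr _ _ 0 (by ring)
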